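/- Fix ρ ∈ ℝ and set R* = 1/(√(2πe)·e^ρ). For R > 0 and n ≥ 1 let V_n(R) = e^{nρ}·vol_n(B_n(√n·R)), where vol_n is Lebesgue measure on ℝⁿ. Then lim_{n→∞} V_n(R) = 0 whenever 0 < R < R*, and lim_{n→∞} V_n(R) = ∞ whenever R > R*. -/
import Mathlib


open MeasureTheory Filter Real
open scoped ENNReal Topology Nat

lemma logDivSelf : Tendsto (fun n : ℕ => Real.log n / n) atTop (nhds 0) :=
  (Real.isLittleO_log_id_atTop.tendsto_div_nhds_zero).comp tendsto_natCast_atTop_atTop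

lemma weakStirling : Tendsto (fun n : ℕ => Real.log (n ! : ℝ) / n - Real.log n + 1) atTop (nhds 0) := by
  have h1 : Tendsto (fun n : ℕ => Real.log (Stirling.stirlingSeq n) / n) atTop (nhds 0) := by
    have hl : Tendsto (fun n : ℕ => Real.log (Stirling.stirlingSeq n)) atTop
        (nhds (Real.log (Real.sqrt π))) :=
      (Real.continuousAt_log (by positivity)).tendsto.comp Stirling.tendsto_stirlingSeq_sqrt_pi
    exact hl.div_atTop tendsto_natCast_atTop_atTop
  have h2 : Tendsto (fun n : ℕ => (1/2) * Real.log (2*n) / n) atTop (nhds 0) := by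
    have heq : ∀ᶠ n : ℕ in atTop, (1/2) * (Real.log 2 / n) + (1/2) * (Real.log n / n)
        = (1/2) * Real.log (2*n) / n := by
      filter_upwards [eventually_ge_atTop 1] with n hn
      have hn' : (0:ℝ) < n := by exact_mod_cast hn
      rw [Real.log_mul (by norm_num) (ne_of_gt hn')]
      ring
    have h := ((tendsto_const_div_atTop_nhds_zero_nat (Real.log 2)).const_mul (1/2:ℝ)).add
      (logDivSelf.const_mul (1/2:ℝ))
    rw [show (1/2:ℝ) * 0 + 1/2 * 0 = 0 by ring] at h
    exact h.congr' heq
  have hs := h1.add h2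
  rw [add_zero] at hs
  apply hs.congr'
  filter_upwards [eventually_ge_atTop 1] with n hn
  have hn' : (0:ℝ) < n := by exact_mod_cast hn
  have hf := Stirling.log_stirlingSeq_formula n
  have hlogdiv : Real.log ((n:ℝ) / Real.exp 1) = Real.log n - 1 := by
    rw [Real.log_div (ne_of_gt hn') (Real.exp_ne_zero 1), Real.log_exp]
  rw [hlogdiv] at hf
  have hn0 : (n:ℝ) ≠ 0 := ne_of_gt hn'
  rw [hf]
  field_simp
  ring

lemma div2_tendsto : Tendsto (fun n : ℕ => n / 2) atTop atTop :=
  tendsto_atTop_atTop.2 fun b => ⟨2 * b, fun a ha => (Nat.le_div_iff_mul_le (by norm_num)).2 (by omega)⟩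

lemma div2_cast (n : ℕ) : ((n / 2 : ℕ) : ℝ) = ((n : ℝ) - ((n % 2 : ℕ) : ℝ)) / 2 := by
  have h : 2 * (n / 2) + n % 2 = n := Nat.div_add_mod n 2
  have h2 : ((2 * (n / 2) + n % 2 : ℕ) : ℝ) = (n : ℝ) := by exact_mod_cast congrArg (fun k : ℕ => (k : ℝ)) h
  push_cast at h2
  linarith

lemma mod2_div_tendsto : Tendsto (fun n : ℕ => ((n % 2 : ℕ) : ℝ) / (2 * n)) atTop (nhds 0) := by
  apply squeeze_zero' (g := fun n : ℕ => 1 / n)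
  · filter_upwards [eventually_ge_atTop 1] with n hn
    positivity
  · filter_upwards [eventually_ge_atTop 1] with n hn
    have hn' : (0:ℝ) < n := by exact_mod_cast hn
    have hm : ((n % 2 : ℕ) : ℝ) ≤ 1 := by
      have : n % 2 ≤ 1 := by omega
      exact_mod_cast this
    rw [div_le_div_iff₀ (by positivity) hn']
    nlinarith
  · exact tendsto_one_div_atTop_nhds_zero_nat

lemma ratio_tendsto : Tendsto (fun n : ℕ => ((n / 2 : ℕ) : ℝ) / n) atTop (nhds (1/2)) := by
  have h := (tendsto_const_nhds (x := (1/2:ℝ)) (f := atTop)).sub mod2_div_tendsto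
  rw [sub_zero] at h
  apply h.congr'
  filter_upwards [eventually_ge_atTop 1] with n hn
  have hn' : (0:ℝ) < n := by exact_mod_cast hn
  rw [div2_cast]
  field_simp

lemma L3 : Tendsto (fun n : ℕ => Real.log (((n / 2) ! : ℕ) : ℝ) / n - (1/2) * Real.log n) atTop
    (nhds (-(1/2) * Real.log 2 - 1/2)) := by
  have hT1 : Tendsto (fun n : ℕ => ((n / 2 : ℕ) : ℝ) / n *
      (Real.log (((n / 2) ! : ℕ) : ℝ) / (n / 2 : ℕ) - Real.log (n / 2 : ℕ) + 1)) atTop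
      (nhds 0) := by
    have := ratio_tendsto.mul (weakStirling.comp div2_tendsto)
    rw [mul_zero] at this
    exact this
  have hT2 : Tendsto (fun n : ℕ => (((n / 2 : ℕ) : ℝ) / n - 1/2) * Real.log (n / 2 : ℕ)) atTop
      (nhds 0) := by
    refine squeeze_zero_norm' ?_ logDivSelf
    filter_upwards [eventually_ge_atTop 2] with n hn
    have hn' : (0:ℝ) < n := by positivity
    have hm1 : 1 ≤ n / 2 := by omega
    have hm' : (1:ℝ) ≤ ((n / 2 : ℕ) : ℝ) := by exact_mod_cast hm1
    have hmn : ((n / 2 : ℕ) : ℝ) ≤ n := by exact_mod_cast Nat.div_le_self n 2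
    have hlm : |Real.log ((n / 2 : ℕ) : ℝ)| ≤ Real.log n := by
      rw [abs_of_nonneg (Real.log_nonneg hm')]
      exact Real.log_le_log (by linarith) hmn
    have hm2 : ((n % 2 : ℕ) : ℝ) ≤ 1 := by
      have : n % 2 ≤ 1 := by omega
      exact_mod_cast this
    have hm0 : (0:ℝ) ≤ ((n % 2 : ℕ) : ℝ) := by positivity
    have hr : |((n / 2 : ℕ) : ℝ) / n - 1/2| ≤ 1 / n := by
      rw [div2_cast]
      have heq : (((n:ℝ) - ((n % 2 : ℕ) : ℝ)) / 2) / n - 1/2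
          = -(((n % 2 : ℕ) : ℝ) / (2 * n)) := by
        field_simp
        ring
      rw [heq, abs_neg, abs_of_nonneg (by positivity)]
      rw [div_le_div_iff₀ (by positivity) hn']
      nlinarith
    calc ‖(((n / 2 : ℕ) : ℝ) / n - 1/2) * Real.log ((n / 2 : ℕ) : ℝ)‖
        = |((n / 2 : ℕ) : ℝ) / n - 1/2| * |Real.log ((n / 2 : ℕ) : ℝ)| := abs_mul _ _
      _ ≤ (1 / n) * Real.log n := by
          apply mul_le_mul hr hlm (abs_nonneg _) (by positivity)
      _ = Real.log n / n := by ring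
  have hT3 : Tendsto (fun n : ℕ => (1/2) * Real.log (((n / 2 : ℕ) : ℝ) / n)) atTop
      (nhds (-(1/2) * Real.log 2)) := by
    have hlog : Tendsto (fun n : ℕ => Real.log (((n / 2 : ℕ) : ℝ) / n)) atTop
        (nhds (Real.log (1/2))) :=
      (Real.continuousAt_log (by norm_num)).tendsto.comp ratio_tendsto
    have := hlog.const_mul (1/2 : ℝ)
    rw [show Real.log (1/2 : ℝ) = - Real.log 2 by rw [one_div, Real.log_inv]] at this
    convert this using 2
    ring
  have hT4 : Tendsto (fun n : ℕ => -(((n / 2 : ℕ) : ℝ) / n)) atTop (nhds (-(1/2))) :=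
    ratio_tendsto.neg
  have hsum := ((hT1.add hT2).add hT3).add hT4
  rw [show ((0:ℝ) + 0) + (-(1/2) * Real.log 2) + (-(1/2)) = -(1/2) * Real.log 2 - 1/2 by ring]
    at hsum
  apply hsum.congr'
  filter_upwards [eventually_ge_atTop 2] with n hn
  have hn' : (0:ℝ) < n := by positivity
  have hm1 : 1 ≤ n / 2 := by omega
  have hm' : (0:ℝ) < ((n / 2 : ℕ) : ℝ) := by exact_mod_cast hm1
  rw [Real.log_div (ne_of_gt hm') (ne_of_gt hn')]
  field_simp
  ring

lemma L3' : Tendsto (fun n : ℕ => Real.log (((n / 2 + 1) ! : ℕ) : ℝ) / n - (1/2) * Real.log n)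
    atTop (nhds (-(1/2) * Real.log 2 - 1/2)) := by
  have hsucc : Tendsto (fun n : ℕ => Real.log ((n / 2 : ℕ) + 1 : ℝ) / n) atTop (nhds 0) := by
    refine squeeze_zero_norm' ?_ logDivSelf
    filter_upwards [eventually_ge_atTop 2] with n hn
    have hn' : (0:ℝ) < n := by positivity
    have h1 : ((n / 2 : ℕ) : ℝ) + 1 ≤ n := by
      have : n / 2 + 1 ≤ n := by omega
      exact_mod_cast this
    have h0 : (1:ℝ) ≤ ((n / 2 : ℕ) : ℝ) + 1 := by
      linarith [Nat.cast_nonneg (α := ℝ) (n / 2)]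
    have hlog : Real.log ((n / 2 : ℕ) + 1 : ℝ) ≤ Real.log n :=
      Real.log_le_log (by linarith) h1
    rw [norm_div, Real.norm_natCast, Real.norm_eq_abs, abs_of_nonneg (Real.log_nonneg h0)]
    gcongr
  have h := L3.add hsucc
  rw [add_zero] at h
  apply h.congr'
  filter_upwards [eventually_ge_atTop 1] with n hn
  have hf : (((n / 2 + 1) ! : ℕ) : ℝ) = ((n / 2 : ℕ) + 1 : ℝ) * (((n / 2) ! : ℕ) : ℝ) := by
    rw [Nat.factorial_succ]
    push_cast
    ring
  rw [hf, Real.log_mul (by positivity) (by positivity)]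
  ring

lemma L4 : Tendsto (fun n : ℕ => Real.log (Real.Gamma ((n:ℝ)/2 + 1)) / n - (1/2) * Real.log n)
    atTop (nhds (-(1/2) * Real.log 2 - 1/2)) := by
  apply tendsto_of_tendsto_of_tendsto_of_le_of_le' L3 L3'
  · filter_upwards [eventually_ge_atTop 2] with n hn
    have hn' : (0:ℝ) < n := by positivity
    have hm1 : 1 ≤ n / 2 := by omega
    have hm' : (1:ℝ) ≤ ((n / 2 : ℕ) : ℝ) := by exact_mod_cast hm1
    have hle : ((n / 2 : ℕ) : ℝ) + 1 ≤ (n:ℝ)/2 + 1 := by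
      have := Nat.cast_div_le (m := n) (n := 2) (α := ℝ)
      push_cast at this
      linarith
    have hmono := Real.Gamma_strictMonoOn_Ici.monotoneOn
      (a := ((n / 2 : ℕ) : ℝ) + 1) (b := (n:ℝ)/2 + 1)
      (by simp only [Set.mem_Ici]; linarith)
      (by simp only [Set.mem_Ici]; linarith) hle
    have hg : (((n / 2) ! : ℕ) : ℝ) ≤ Real.Gamma ((n:ℝ)/2 + 1) := by
      rw [← Real.Gamma_nat_eq_factorial]
      exact_mod_cast hmono
    have hfpos : (0:ℝ) < (((n / 2) ! : ℕ) : ℝ) := by positivity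
    have hlog := Real.log_le_log hfpos hg
    have hdiv : Real.log (((n / 2) ! : ℕ) : ℝ) / n ≤ Real.log (Real.Gamma ((n:ℝ)/2 + 1)) / n := by
      gcongr
    linarith
  · filter_upwards [eventually_ge_atTop 2] with n hn
    have hn' : (0:ℝ) < n := by positivity
    have hm1 : 1 ≤ n / 2 := by omega
    have hm' : (1:ℝ) ≤ ((n / 2 : ℕ) : ℝ) := by exact_mod_cast hm1
    have hn2 : (2:ℝ) ≤ (n:ℝ) := by exact_mod_cast hn
    have hle : (n:ℝ)/2 + 1 ≤ ((n / 2 : ℕ) : ℝ) + 2 := by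
      have h2 : (n:ℝ) ≤ 2 * ((n / 2 : ℕ) : ℝ) + 2 := by
        have : n ≤ 2 * (n / 2) + 2 := by omega
        exact_mod_cast this
      linarith
    have hmono := Real.Gamma_strictMonoOn_Ici.monotoneOn
      (a := (n:ℝ)/2 + 1) (b := ((n / 2 : ℕ) : ℝ) + 2)
      (by simp only [Set.mem_Ici]; linarith)
      (by simp only [Set.mem_Ici]; linarith) hle
    have hfact : Real.Gamma (((n / 2 : ℕ) : ℝ) + 2) = (((n / 2 + 1) ! : ℕ) : ℝ) := by
      have := Real.Gamma_nat_eq_factorial (n / 2 + 1)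
      push_cast at this
      convert this using 2
      ring
    have hΓpos : (0:ℝ) < Real.Gamma ((n:ℝ)/2 + 1) :=
      Real.Gamma_pos_of_pos (by positivity)
    have hg : Real.Gamma ((n:ℝ)/2 + 1) ≤ (((n / 2 + 1) ! : ℕ) : ℝ) := by
      rw [← hfact]; exact hmono
    have hlog := Real.log_le_log hΓpos hg
    have hdiv : Real.log (Real.Gamma ((n:ℝ)/2 + 1)) / n
        ≤ Real.log (((n / 2 + 1) ! : ℕ) : ℝ) / n := by
      gcongr
    linarith

/-- Fix `ρ ∈ ℝ` and set `R* = 1/(√(2πe)·e^ρ)`. For `R > 0` and `n ≥ 1` let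
`V_n(R) = e^{nρ}·vol_n(B_n(√n·R))`, where `vol_n` is Lebesgue measure on `ℝⁿ`.
Then `V_n(R) → 0` whenever `0 < R < R*`, and `V_n(R) → ∞` whenever `R > R*`. -/
theorem shannon_volume_threshold (ρ : ℝ)
    (Rstar : ℝ) (hRstar : Rstar = 1 / (Real.sqrt (2 * π * Real.exp 1) * Real.exp ρ))
    (V : ℕ → ℝ → ℝ)
    (hV : ∀ n : ℕ, 1 ≤ n → ∀ R : ℝ, 0 < R →
      V n R = Real.exp (n * ρ) *
        (volume (Metric.closedBall (0 : EuclideanSpace ℝ (Fin n)) (Real.sqrt n * R))).toReal) :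
    (∀ R : ℝ, 0 < R → R < Rstar → Tendsto (fun n : ℕ => V n R) atTop (nhds 0)) ∧
    (∀ R : ℝ, Rstar < R → Tendsto (fun n : ℕ => V n R) atTop atTop) := by
  have h2πe : (0:ℝ) < 2 * π * Real.exp 1 := by positivity
  have hRstar_pos : 0 < Rstar := by rw [hRstar]; positivity
  have hlogRstar : Real.log Rstar = -((1/2) * Real.log (2 * π * Real.exp 1) + ρ) := by
    rw [hRstar, one_div, Real.log_inv,
      Real.log_mul (by positivity) (Real.exp_ne_zero ρ), Real.log_exp,
      Real.log_sqrt h2πe.le]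
    ring
  -- explicit formula
  have hVW : ∀ R : ℝ, 0 < R → ∀ n : ℕ, 1 ≤ n →
      V n R = Real.exp (n * ρ) *
        ((Real.sqrt n * R) ^ n * (Real.sqrt π ^ n / Real.Gamma ((n:ℝ)/2 + 1))) := by
    intro R hR n hn
    have hn' : (0:ℝ) < n := by positivity
    have hΓ : 0 < Real.Gamma ((n:ℝ)/2 + 1) := Real.Gamma_pos_of_pos (by positivity)
    haveI : Nonempty (Fin n) := Fin.pos_iff_nonempty.mp hn
    rw [hV n hn R hR, EuclideanSpace.volume_closedBall]
    simp only [Fintype.card_fin]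
    rw [ENNReal.toReal_mul, ENNReal.toReal_pow, ENNReal.toReal_ofReal (by positivity),
      ENNReal.toReal_ofReal (by positivity)]
  have hVpos : ∀ R : ℝ, 0 < R → ∀ n : ℕ, 1 ≤ n → 0 < V n R := by
    intro R hR n hn
    have hn' : (0:ℝ) < n := by positivity
    have hΓ : 0 < Real.Gamma ((n:ℝ)/2 + 1) := Real.Gamma_pos_of_pos (by positivity)
    rw [hVW R hR n hn]
    positivity
  -- the log-asymptotics
  have main : ∀ R : ℝ, 0 < R → Tendsto (fun n : ℕ => Real.log (V n R) / n) atTop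
      (nhds (Real.log R - Real.log Rstar)) := by
    intro R hR
    have hG : Tendsto (fun n : ℕ => (1/2) * Real.log n
        - Real.log (Real.Gamma ((n:ℝ)/2 + 1)) / n) atTop (nhds ((1/2) * Real.log 2 + 1/2)) := by
      have := L4.neg
      rw [show -(-(1/2) * Real.log 2 - 1/2) = (1/2) * Real.log 2 + 1/2 by ring] at this
      exact this.congr fun n => by ring
    have h := (tendsto_const_nhds
      (x := ρ + Real.log R + (1/2) * Real.log π) (f := atTop (α := ℕ))).add hG
    have hconst : ρ + Real.log R + (1/2) * Real.log π + ((1/2) * Real.log 2 + 1/2)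
        = Real.log R - Real.log Rstar := by
      rw [hlogRstar, Real.log_mul (by positivity) (Real.exp_ne_zero 1),
        Real.log_mul (by norm_num) (ne_of_gt Real.pi_pos), Real.log_exp]
      ring
    rw [hconst] at h
    apply h.congr'
    filter_upwards [eventually_ge_atTop 1] with n hn
    have hn' : (0:ℝ) < n := by positivity
    have hΓ : 0 < Real.Gamma ((n:ℝ)/2 + 1) := Real.Gamma_pos_of_pos (by positivity)
    rw [hVW R hR n hn, Real.log_mul (Real.exp_ne_zero _) (by positivity),
      Real.log_mul (by positivity) (by positivity), Real.log_exp, Real.log_pow,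
      Real.log_div (by positivity) (ne_of_gt hΓ), Real.log_pow,
      Real.log_mul (by positivity) (ne_of_gt hR), Real.log_sqrt hn'.le,
      Real.log_sqrt Real.pi_pos.le]
    field_simp
    ring
  constructor
  · intro R hR hRlt
    set L := Real.log R - Real.log Rstar with hL
    have hLneg : L < 0 := by
      have := Real.log_lt_log hR hRlt
      simp only [hL]; linarith
    have hev : ∀ᶠ n : ℕ in atTop, Real.log (V n R) / n < L / 2 :=
      (main R hR).eventually_lt_const (by linarith)
    have hbot : Tendsto (fun n : ℕ => Real.log (V n R)) atTop atBot := by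
      apply tendsto_atBot_mono' atTop ?_
        ((tendsto_const_mul_atBot_of_neg (by linarith : L/2 < 0)).2 tendsto_natCast_atTop_atTop)
      filter_upwards [hev, eventually_ge_atTop 1] with n h1 h2
      have hn' : (0:ℝ) < n := by positivity
      exact le_of_lt ((div_lt_iff₀ hn').1 h1)
    have := Real.tendsto_exp_atBot.comp hbot
    apply this.congr'
    filter_upwards [eventually_ge_atTop 1] with n hn
    exact Real.exp_log (hVpos R hR n hn)
  · intro R hRlt
    have hR : 0 < R := lt_trans hRstar_pos hRlt
    set L := Real.log R - Real.log Rstar with hL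
    have hLpos : 0 < L := by
      have := Real.log_lt_log hRstar_pos hRlt
      simp only [hL]; linarith
    have hev : ∀ᶠ n : ℕ in atTop, L / 2 < Real.log (V n R) / n :=
      (main R hR).eventually_const_lt (by linarith)
    have htop : Tendsto (fun n : ℕ => Real.log (V n R)) atTop atTop := by
      apply tendsto_atTop_mono' atTop ?_
        (Tendsto.const_mul_atTop (by linarith : 0 < L/2) tendsto_natCast_atTop_atTop)
      filter_upwards [hev, eventually_ge_atTop 1] with n h1 h2
      have hn' : (0:ℝ) < n := by positivity
      exact le_of_lt ((lt_div_iff₀ hn').1 h1)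
    have := Real.tendsto_exp_atTop.comp htop
    apply this.congr'
    filter_upwards [eventually_ge_atTop 1] with n hn
    exact Real.exp_log (hVpos R hR n hn)
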